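/- arXiv:1012.4532 — 8 statements merged into one kernel-verified Lean document; each statement's English description precedes it below -/
import Mathlib

section
/- For any idempotent ultrafilter p on a semigroup S and any A ∈ p, the set A* := A ∩ {s ∈ S : s⁻¹A ∈ p} satisfies A* ∈ p and (A*)* = A* (Galvin Fixpoint Lemma). -/
attribute [local instance] Ultrafilter.mul Ultrafilter.semigroup

/-- `starSet p A = A* = A ∩ {s : s⁻¹A ∈ p}`. -/
def starSet {S : Type*} [Mul S] (p : Ultrafilter S) (A : Set S) : Set S :=
  A ∩ {s : S | {t : S | s * t ∈ A} ∈ p}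

/-!
Idempotence `p * p = p` says exactly that `A ∈ p` implies `{s : s⁻¹A ∈ p} ∈ p`, so `A* ∈ p`.
For `(A*)* = A*`, associativity gives `s⁻¹(A*) = (s⁻¹A)*`; if `s ∈ A*` then `s⁻¹A ∈ p`,
hence `(s⁻¹A)* ∈ p` by the first part, i.e. `s⁻¹(A*) ∈ p`.
-/

section

variable {S : Type*}

theorem setOf_preimage_mul_left_mem_of_mul_self [Mul S] {p : Ultrafilter S} (hp : p * p = p)
    {A : Set S} (hA : A ∈ p) : {s : S | (s * ·) ⁻¹' A ∈ p} ∈ p := by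
  rw [← hp] at hA
  exact hA

theorem starSet_mem_of_mul_self [Mul S] {p : Ultrafilter S} (hp : p * p = p) {A : Set S}
    (hA : A ∈ p) : starSet p A ∈ p :=
  Filter.inter_mem hA (setOf_preimage_mul_left_mem_of_mul_self hp hA)

theorem starSet_preimage_mul_left [Semigroup S] (p : Ultrafilter S) (A : Set S) (s : S) :
    starSet p ((s * ·) ⁻¹' A) = (s * ·) ⁻¹' starSet p A := by
  ext t
  simp only [starSet, Set.mem_inter_iff, Set.mem_preimage, Set.mem_ofPred_eq, mul_assoc]

end

/-- Galvin Fixpoint Lemma: for an idempotent ultrafilter `p` on a semigroup `S`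
and `A ∈ p`, the set `A*` satisfies `A* ∈ p` and `(A*)* = A*`. -/
theorem galvin_fixpoint {S : Type*} [Semigroup S] (p : Ultrafilter S)
    (hp : p * p = p) (A : Set S) (hA : A ∈ p) :
    starSet p A ∈ p ∧ starSet p (starSet p A) = starSet p A := by
  refine ⟨starSet_mem_of_mul_self hp hA, Set.Subset.antisymm Set.inter_subset_left ?_⟩
  intro s hs
  refine ⟨hs, ?_⟩
  have hpre : starSet p ((s * ·) ⁻¹' A) ∈ p := starSet_mem_of_mul_self hp hs.2
  rwa [starSet_preimage_mul_left] at hpre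
end

section
/- If S is a partial subsemigroup of a semigroup T, then δS := the set of ultrafilters on T containing every set σ(s) = {t ∈ S : s·t is defined in S} as well as S itself, is a subsemigroup of βT: for p, q ∈ δS, p·q ∈ δS. -/
attribute [local instance] Ultrafilter.mul Ultrafilter.semigroup

/-- `σ(s) = {t ∈ S : s·t ∈ S}`, the set of elements compatible with `s`
in the partial subsemigroup `S`. -/
def sigmaSet {T : Type*} [Mul T] (S : Set T) (s : T) : Set T :=
  {t | t ∈ S ∧ s * t ∈ S}

/-- `δS` : ultrafilters on `T` containing `S` and every `σ(s)` for `s ∈ S`. -/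
def deltaS {T : Type*} [Mul T] (S : Set T) : Set (Ultrafilter T) :=
  {p | S ∈ p ∧ ∀ s ∈ S, sigmaSet S s ∈ p}

/-- If `S` is an adequate partial subsemigroup of a semigroup `T`
(the family `{σ(s) : s ∈ S}` has the finite intersection property),
then `δS` is a subsemigroup of `βT`. -/
theorem deltaS_subsemigroup {T : Type*} [Semigroup T] (S : Set T)
    (hadequate : ∀ F : Finset T, ↑F ⊆ S → (S ∩ ⋂ s ∈ F, sigmaSet S s).Nonempty)
    (p q : Ultrafilter T) (hp : p ∈ deltaS S) (hq : q ∈ deltaS S) :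
    p * q ∈ deltaS S := by
  obtain ⟨hpS, hpσ⟩ := hp
  obtain ⟨hqS, hqσ⟩ := hq
  constructor
  · have : ∀ᶠ u in (p : Filter T), ∀ᶠ t in (q : Filter T), u * t ∈ S := by
      filter_upwards [hpS] with u hu
      filter_upwards [hqσ u hu] with t ht
      exact ht.2
    exact (Ultrafilter.eventually_mul p q _).2 this
  · intro s hs
    have : ∀ᶠ u in (p : Filter T), ∀ᶠ t in (q : Filter T), u * t ∈ sigmaSet S s := by
      filter_upwards [hpσ s hs] with u hu
      filter_upwards [hqσ u hu.1, hqσ (s * u) hu.2] with t ht1 ht2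
      exact ⟨ht1.2, by rw [← mul_assoc]; exact ht2.2⟩
    exact (Ultrafilter.eventually_mul p q _).2 this
end

section
/- If a union ultrafilter u on F has the Ramsey property for pairs, then u is stable: for every countable sequence of sets FU(s^α) ∈ u (α < ω) there is FU(t) ∈ u with t ⊑* s^α (i.e., all but finitely many t_j lie in FU(s^α), with all finite unions of those in FU(s^α)) for every α. -/
open Finset

/-- `FU t` : the set of finite unions of an infinite sequence `t` in `F`. -/
def FU (t : ℕ → Finset ℕ) : Set (Finset ℕ) :=
  {x | ∃ v : Finset ℕ, v.Nonempty ∧ x = v.biUnion t}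

/-- a sequence of nonempty pairwise disjoint finite sets. -/
def IsDisjointSeq (t : ℕ → Finset ℕ) : Prop :=
  (∀ i, (t i).Nonempty) ∧ Pairwise (Function.onFun Disjoint t)

/-- `ordLT s t` : `max s < min t`, i.e. every element of `s` is below every element of `t`. -/
def ordLT (s t : Finset ℕ) : Prop := ∀ a ∈ s, ∀ b ∈ t, a < b

/-- `t` is an almost condensation of `s`: the FU-set of some tail of `t` is inside `FU s`. -/
def AlmostCond (t s : ℕ → Finset ℕ) : Prop :=
  ∃ m, FU (fun n => t (n + m)) ⊆ FU s

/-- a union ultrafilter: an ultrafilter on `F` with a base of FU-sets of disjoint sequences. -/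
def IsUnionUltrafilter (u : Ultrafilter (Finset ℕ)) : Prop :=
  ∀ A ∈ u, ∃ t, IsDisjointSeq t ∧ FU t ∈ u ∧ FU t ⊆ A

/-- stability: countably many FU-sets in `u` admit a common almost condensation in `u`. -/
def IsStable (u : Ultrafilter (Finset ℕ)) : Prop :=
  ∀ s : ℕ → ℕ → Finset ℕ, (∀ α, IsDisjointSeq (s α)) → (∀ α, FU (s α) ∈ u) →
    ∃ t, IsDisjointSeq t ∧ FU t ∈ u ∧ ∀ α, AlmostCond t (s α)

/-- the Ramsey property for pairs: every finite partition of the ordered pairs `F²_<`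
has a homogeneous set of the form `A²_<` with `A ∈ u`. -/
def RamseyPairs (u : Ultrafilter (Finset ℕ)) : Prop :=
  ∀ n : ℕ, ∀ c : Finset ℕ × Finset ℕ → Fin (n + 1),
    ∃ A ∈ u, ∃ i, ∀ v ∈ A, ∀ w ∈ A, ordLT v w → c (v, w) = i

/-!
Colour a pair `v < w` by whether `w ∈ FU (s α)` for every `α ≤ max v`. For fixed `v` the good
`w` form a finite intersection of sets in `u`, so a homogeneous `A ∈ u` must have the good colour.
Take `FU t ⊆ A` in `u`. Given `α`, pick some `t j` with `max (t j) ≥ α`; every finite union `w`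
of the tail of `t` lying above `max (t j)` then satisfies `t j < w`, hence `w ∈ FU (s α)`.
-/

open Filter

def above (N : ℕ) : Set (Finset ℕ) := {x | ∀ a ∈ x, N < a}

lemma mem_FU_self (t : ℕ → Finset ℕ) (i : ℕ) : t i ∈ FU t :=
  ⟨{i}, singleton_nonempty i, by simp⟩

lemma FU_comp_subset (t : ℕ → Finset ℕ) (f : ℕ → ℕ) : FU (t ∘ f) ⊆ FU t := by
  classical
  rintro x ⟨v, hv, rfl⟩
  exact ⟨v.image f, hv.image f, by rw [image_biUnion]; rfl⟩

lemma FU_subset_above {t : ℕ → Finset ℕ} {N : ℕ} (h : ∀ i, t i ∈ above N) :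
    FU t ⊆ above N := by
  rintro x ⟨v, -, rfl⟩ a ha
  obtain ⟨i, -, hai⟩ := mem_biUnion.1 ha
  exact h i a hai

lemma ordLT_of_mem_above_sup {v w : Finset ℕ} (hw : w ∈ above (v.sup id)) : ordLT v w :=
  fun _ ha _ hb => (le_sup (f := id) ha).trans_lt (hw _ hb)

lemma eventually_mem_above_of_pairwise_disjoint {t : ℕ → Finset ℕ}
    (ht : Pairwise (Function.onFun Disjoint t)) (N : ℕ) :
    ∀ᶠ j in atTop, t j ∈ above N := by
  have hfin (a : ℕ) : {j | a ∈ t j}.Finite := Set.Subsingleton.finite fun i hi j hj =>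
    by_contra fun hij => disjoint_left.1 (ht hij) hi hj
  have h : ∀ᶠ j in atTop, ∀ a ∈ Set.Iic N, a ∉ t j := by
    rw [eventually_all_finite (Set.finite_Iic N), ← Nat.cofinite_eq_atTop]
    exact fun a _ => (hfin a).compl_mem_cofinite
  filter_upwards [h] with j hj a ha
  exact lt_of_not_ge fun haN => hj a haN ha

lemma IsUnionUltrafilter.above_mem {u : Ultrafilter (Finset ℕ)} (hu : IsUnionUltrafilter u)
    (N : ℕ) : above N ∈ u := by
  have hnot (a : ℕ) : {x : Finset ℕ | a ∉ x} ∈ u := by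
    refine Ultrafilter.compl_mem_iff_notMem.2 fun ha => ?_
    obtain ⟨t, ht, -, hsub⟩ := hu _ ha
    exact disjoint_left.1 (ht.2 zero_ne_one) (hsub (mem_FU_self t 0))
      (hsub (mem_FU_self t 1))
  have h : ⋂ a ∈ Set.Iic N, {x : Finset ℕ | a ∉ x} ∈ u :=
    (biInter_mem (Set.finite_Iic N)).2 fun a _ => hnot a
  refine mem_of_superset h fun x hx a ha => lt_of_not_ge fun haN => ?_
  exact Set.mem_iInter₂.1 hx a haN ha

lemma RamseyPairs.exists_forall_ordLT {u : Ultrafilter (Finset ℕ)} (hR : RamseyPairs u)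
    (hu : IsUnionUltrafilter u) (r : Finset ℕ → Finset ℕ → Prop) (hr : ∀ v, {w | r v w} ∈ u) :
    ∃ A ∈ u, ∀ v ∈ A, ∀ w ∈ A, ordLT v w → r v w := by
  classical
  obtain ⟨A, hA, i, hhom⟩ := hR 1 fun p => if r p.1 p.2 then 0 else 1
  obtain ⟨v, hv⟩ := u.nonempty_of_mem hA
  obtain ⟨w, ⟨hwA, hvw⟩, hw⟩ :=
    u.nonempty_of_mem (inter_mem (inter_mem hA (hr v)) (hu.above_mem (v.sup id)))
  have hi : i = 0 := by
    simpa [show r v w from hvw] using (hhom v hv w hwA (ordLT_of_mem_above_sup hw)).symm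
  refine ⟨A, hA, fun v hv w hw hlt => by_contra fun h => ?_⟩
  simpa [h, hi] using hhom v hv w hw hlt

/-- A union ultrafilter with the Ramsey property for pairs is stable. -/
theorem ramsey_pairs_implies_stable (u : Ultrafilter (Finset ℕ))
    (hu : IsUnionUltrafilter u) (hR : RamseyPairs u) : IsStable u := by
  intro s _ hsu
  have hgood (v : Finset ℕ) : {w | ∀ α ∈ Set.Iic (v.sup id), w ∈ FU (s α)} ∈ u :=
    mem_of_superset ((biInter_mem (Set.finite_Iic _)).2 fun α _ => hsu α) fun _ => Set.mem_iInter₂.1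
  obtain ⟨A, hA, hAr⟩ := hR.exists_forall_ordLT hu _ hgood
  obtain ⟨t, ht, htu, htA⟩ := hu A hA
  refine ⟨t, ht, htu, fun α => ?_⟩
  obtain ⟨j, hj⟩ := (eventually_mem_above_of_pairwise_disjoint ht.2 α).exists
  obtain ⟨m, hm⟩ := eventually_atTop.1
    (eventually_mem_above_of_pairwise_disjoint ht.2 ((t j).sup id))
  refine ⟨m, fun w hw =>
    hAr _ (htA (mem_FU_self t j)) w (htA (FU_comp_subset t (· + m) hw)) ?_ α ?_⟩
  · exact ordLT_of_mem_above_sup (FU_subset_above (fun i => hm _ (Nat.le_add_left m i)) hw)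
  · obtain ⟨a, ha⟩ := ht.1 j
    exact (hj a ha).le.trans (le_sup (f := id) ha)
end

section
/- In any condensation argument with splitting points: if x < y < z are pairwise ordered elements of FU(t) for a disjoint sequence t, then π(x ∪ z) = π(x) + π(z) + 1, where π(w) counts the n ∈ w such that w ∩ (n+1) and w \ (n+1) are both in FU(t) and some t_k satisfies w ∩ (n+1) < t_k < w \ (n+1). Consequently at least one of π(x), π(z), π(x∪z) is odd. -/
open Finset

/-- `w` splits at `n ∈ w`: both `w ∩ (n+1)` and `w \ (n+1)` are in `FU t` and
some `t k` lies strictly between them. -/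
def SplitsAt (t : ℕ → Finset ℕ) (w : Finset ℕ) (n : ℕ) : Prop :=
  n ∈ w ∧ w.filter (fun a => a ≤ n) ∈ FU t ∧ w.filter (fun a => n < a) ∈ FU t ∧
    ∃ k, ordLT (w.filter (fun a => a ≤ n)) (t k) ∧ ordLT (t k) (w.filter (fun a => n < a))

/-- `π w` : the number of splitting points of `w`. -/
noncomputable def splitCount (t : ℕ → Finset ℕ) (w : Finset ℕ) : ℕ :=
  Set.ncard {n | SplitsAt t w n}

lemma FU_nonempty {t : ℕ → Finset ℕ} (ht : IsDisjointSeq t) {x : Finset ℕ}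
    (hx : x ∈ FU t) : x.Nonempty := by
  obtain ⟨v, hv, rfl⟩ := hx
  obtain ⟨i, hi⟩ := hv
  obtain ⟨a, ha⟩ := ht.1 i
  exact ⟨a, mem_biUnion.2 ⟨i, hi, ha⟩⟩

lemma FU_union {t : ℕ → Finset ℕ} {x z : Finset ℕ}
    (hx : x ∈ FU t) (hz : z ∈ FU t) : x ∪ z ∈ FU t := by
  obtain ⟨v, hv, rfl⟩ := hx
  obtain ⟨u, hu, rfl⟩ := hz
  refine ⟨v ∪ u, hv.mono subset_union_left, ?_⟩
  ext a
  simp [mem_biUnion, or_and_right, exists_or]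

lemma FU_sdiff {t : ℕ → Finset ℕ} (ht : IsDisjointSeq t) {w z : Finset ℕ}
    (hw : w ∈ FU t) (hz : z ∈ FU t) (hzw : z ⊆ w) (hne : (w \ z).Nonempty) :
    w \ z ∈ FU t := by
  obtain ⟨v, hv, rfl⟩ := hw
  obtain ⟨u, hu, hzu⟩ := hz
  have huv : u ⊆ v := by
    intro i hi
    obtain ⟨a, ha⟩ := ht.1 i
    have haz : a ∈ z := hzu ▸ mem_biUnion.2 ⟨i, hi, ha⟩
    obtain ⟨j, hj, haj⟩ := mem_biUnion.1 (hzw haz)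
    rcases eq_or_ne i j with rfl | hij
    · exact hj
    · exact absurd haj (Finset.disjoint_left.1 (ht.2 hij : Disjoint (t i) (t j)) ha)
  have hkey : v.biUnion t \ z = (v \ u).biUnion t := by
    ext a
    simp only [mem_sdiff, mem_biUnion]
    constructor
    · rintro ⟨⟨j, hj, haj⟩, haz⟩
      refine ⟨j, ⟨hj, fun hju => haz ?_⟩, haj⟩
      exact hzu ▸ mem_biUnion.2 ⟨j, hju, haj⟩
    · rintro ⟨j, hj, haj⟩
      refine ⟨⟨j, hj.1, haj⟩, fun haz => ?_⟩
      obtain ⟨i, hi, hai⟩ := mem_biUnion.1 (hzu ▸ haz : a ∈ u.biUnion t)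
      rcases eq_or_ne i j with rfl | hij
      · exact hj.2 hi
      · exact (Finset.disjoint_left.1 (ht.2 hij) hai) haj
  refine ⟨v \ u, ?_, hkey⟩
  obtain ⟨a, ha⟩ := hne
  rw [hkey] at ha
  obtain ⟨j, hj, -⟩ := mem_biUnion.1 ha
  exact ⟨j, hj⟩

lemma not_splitsAt_max {t : ℕ → Finset ℕ} (ht : IsDisjointSeq t) {x : Finset ℕ}
    (hne : x.Nonempty) : ¬ SplitsAt t x (x.max' hne) := by
  rintro ⟨-, -, h, -⟩
  have : x.filter (fun a => x.max' hne < a) = ∅ := by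
    apply filter_eq_empty_iff.2
    intro a ha
    exact not_lt.2 (le_max' x a ha)
  rw [this] at h
  exact absurd (FU_nonempty ht h) (by simp)

lemma splitsAt_mem {t : ℕ → Finset ℕ} {w : Finset ℕ} {n : ℕ}
    (h : SplitsAt t w n) : n ∈ w := h.1


/-- If `x < y < z` are pairwise ordered elements of `FU t` then
`π(x ∪ z) = π(x) + π(z) + 1`; consequently one of `π(x), π(z), π(x ∪ z)` is odd. -/

theorem splitCount_union (t : ℕ → Finset ℕ) (ht : IsDisjointSeq t)
    (x y z : Finset ℕ) (hx : x ∈ FU t) (hy : y ∈ FU t) (hz : z ∈ FU t)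
    (hxy : ordLT x y) (hyz : ordLT y z) (hxz : ordLT x z) :
    splitCount t (x ∪ z) = splitCount t x + splitCount t z + 1 ∧
    (Odd (splitCount t x) ∨ Odd (splitCount t z) ∨ Odd (splitCount t (x ∪ z))) := by
  have hxne := FU_nonempty ht hx
  have hzne := FU_nonempty ht hz
  set M := x.max' hxne with hMdef
  have hMx : M ∈ x := x.max'_mem hxne
  have hdisj_xz : Disjoint x z :=
    Finset.disjoint_left.2 fun a ha hb => lt_irrefl a (hxz a ha a hb)
  -- filter identities
  have hfx : ∀ n ∈ x,
      (x ∪ z).filter (fun a => a ≤ n) = x.filter (fun a => a ≤ n) ∧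
      (x ∪ z).filter (fun a => n < a) = x.filter (fun a => n < a) ∪ z := by
    intro n hn
    constructor
    · ext a
      simp only [mem_filter, mem_union]
      constructor
      · rintro ⟨ha | ha, hle⟩
        · exact ⟨ha, hle⟩
        · exact absurd hle (not_le.2 (hxz n hn a ha))
      · rintro ⟨ha, hle⟩; exact ⟨Or.inl ha, hle⟩
    · ext a
      simp only [mem_filter, mem_union]
      constructor
      · rintro ⟨ha | ha, hlt⟩
        · exact Or.inl ⟨ha, hlt⟩
        · exact Or.inr ha
      · rintro (⟨ha, hlt⟩ | ha)
        · exact ⟨Or.inl ha, hlt⟩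
        · exact ⟨Or.inr ha, hxz n hn a ha⟩
  have hfz : ∀ n ∈ z,
      (x ∪ z).filter (fun a => a ≤ n) = x ∪ z.filter (fun a => a ≤ n) ∧
      (x ∪ z).filter (fun a => n < a) = z.filter (fun a => n < a) := by
    intro n hn
    constructor
    · ext a
      simp only [mem_filter, mem_union]
      constructor
      · rintro ⟨ha | ha, hle⟩
        · exact Or.inl ha
        · exact Or.inr ⟨ha, hle⟩
      · rintro (ha | ⟨ha, hle⟩)
        · exact ⟨Or.inl ha, le_of_lt (hxz a ha n hn)⟩
        · exact ⟨Or.inr ha, hle⟩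
    · ext a
      simp only [mem_filter, mem_union]
      constructor
      · rintro ⟨ha | ha, hlt⟩
        · exact absurd hlt (not_lt.2 (le_of_lt (hxz a ha n hn)))
        · exact ⟨ha, hlt⟩
      · rintro ⟨ha, hlt⟩; exact ⟨Or.inr ha, hlt⟩
  -- the key set identity
  have key : {n | SplitsAt t (x ∪ z) n} =
      insert M ({n | SplitsAt t x n} ∪ {n | SplitsAt t z n}) := by
    ext n
    simp only [Set.mem_insert_iff, Set.mem_union, Set.mem_setOf_eq]
    constructor
    · intro h
      rcases mem_union.1 h.1 with hnx | hnz
      · by_cases hnM : n = M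
        · exact Or.inl hnM
        · refine Or.inr (Or.inl ⟨hnx, ?_, ?_, ?_⟩)
          · have h21 := h.2.1
            rwa [(hfx n hnx).1] at h21
          · have hw := h.2.2.1
            rw [(hfx n hnx).2] at hw
            have hcancel : (x.filter (fun a => n < a) ∪ z) \ z = x.filter (fun a => n < a) :=
              Finset.union_sdiff_cancel_right
                (Finset.disjoint_of_subset_left (filter_subset _ _) hdisj_xz)
            have hne : ((x.filter (fun a => n < a) ∪ z) \ z).Nonempty := by
              rw [hcancel]
              exact ⟨M, mem_filter.2 ⟨hMx, lt_of_le_of_ne (le_max' x n hnx) hnM⟩⟩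
            have := FU_sdiff ht hw hz subset_union_right hne
            rwa [hcancel] at this
          · obtain ⟨k, hk1, hk2⟩ := h.2.2.2
            rw [(hfx n hnx).1] at hk1
            refine ⟨k, hk1, fun a ha b hb => hk2 a ha b ?_⟩
            rw [(hfx n hnx).2]
            exact mem_union_left _ hb
      · refine Or.inr (Or.inr ⟨hnz, ?_, ?_, ?_⟩)
        · have hw := h.2.1
          rw [(hfz n hnz).1] at hw
          have hcancel : (x ∪ z.filter (fun a => a ≤ n)) \ x = z.filter (fun a => a ≤ n) :=
            Finset.union_sdiff_cancel_left
              (Finset.disjoint_of_subset_right (filter_subset _ _) hdisj_xz)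
          have hne : ((x ∪ z.filter (fun a => a ≤ n)) \ x).Nonempty := by
            rw [hcancel]
            exact ⟨n, mem_filter.2 ⟨hnz, le_refl n⟩⟩
          have := FU_sdiff ht hw hx subset_union_left hne
          rwa [hcancel] at this
        · have hw := h.2.2.1
          rwa [(hfz n hnz).2] at hw
        · obtain ⟨k, hk1, hk2⟩ := h.2.2.2
          rw [(hfz n hnz).2] at hk2
          refine ⟨k, fun a ha b hb => hk1 a ?_ b hb, hk2⟩
          rw [(hfz n hnz).1]
          exact mem_union_right _ ha
    · have hfle : (x ∪ z).filter (fun a => a ≤ M) = x := by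
        ext a
        simp only [mem_filter, mem_union]
        constructor
        · rintro ⟨ha | ha, hle⟩
          · exact ha
          · exact absurd hle (not_le.2 (hxz M hMx a ha))
        · intro ha; exact ⟨Or.inl ha, le_max' x a ha⟩
      have hfgt : (x ∪ z).filter (fun a => M < a) = z := by
        ext a
        simp only [mem_filter, mem_union]
        constructor
        · rintro ⟨ha | ha, hlt⟩
          · exact absurd hlt (not_lt.2 (le_max' x a ha))
          · exact ha
        · intro ha; exact ⟨Or.inr ha, hxz M hMx a ha⟩
      rintro (rfl | hsx | hsz)
      · refine ⟨mem_union_left z hMx, ?_, ?_, ?_⟩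
        · rw [hfle]; exact hx
        · rw [hfgt]; exact hz
        · obtain ⟨u, hu, hyu⟩ := hy
          obtain ⟨i, hi⟩ := hu
          refine ⟨i, ?_, ?_⟩
          · rw [hfle]
            intro a ha b hb
            exact hxy a ha b (hyu ▸ mem_biUnion.2 ⟨i, hi, hb⟩)
          · rw [hfgt]
            intro a ha b hb
            exact hyz a (hyu ▸ mem_biUnion.2 ⟨i, hi, ha⟩) b hb
      · have hnx := hsx.1
        refine ⟨mem_union_left _ hnx, ?_, ?_, ?_⟩
        · rw [(hfx n hnx).1]; exact hsx.2.1
        · rw [(hfx n hnx).2]; exact FU_union hsx.2.2.1 hz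
        · obtain ⟨k, hk1, hk2⟩ := hsx.2.2.2
          refine ⟨k, by rw [(hfx n hnx).1]; exact hk1, ?_⟩
          rw [(hfx n hnx).2]
          intro b hb c hc
          rcases mem_union.1 hc with hc | hc
          · exact hk2 b hb c hc
          · obtain ⟨a, ha⟩ := FU_nonempty ht hsx.2.2.1
            exact (hk2 b hb a ha).trans (hxz a (mem_filter.1 ha).1 c hc)
      · have hnz := hsz.1
        refine ⟨mem_union_right _ hnz, ?_, ?_, ?_⟩
        · rw [(hfz n hnz).1]; exact FU_union hx hsz.2.1
        · rw [(hfz n hnz).2]; exact hsz.2.2.1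
        · obtain ⟨k, hk1, hk2⟩ := hsz.2.2.2
          refine ⟨k, ?_, by rw [(hfz n hnz).2]; exact hk2⟩
          rw [(hfz n hnz).1]
          intro a ha b hb
          rcases mem_union.1 ha with ha | ha
          · exact (hxz a ha n hnz).trans
              (hk1 n (mem_filter.2 ⟨hnz, le_refl n⟩) b hb)
          · exact hk1 a ha b hb
  -- counting
  have hfinx : {n | SplitsAt t x n}.Finite :=
    x.finite_toSet.subset fun n hn => hn.1
  have hfinz : {n | SplitsAt t z n}.Finite :=
    z.finite_toSet.subset fun n hn => hn.1
  have hdisjS : Disjoint {n | SplitsAt t x n} {n | SplitsAt t z n} :=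
    Set.disjoint_left.2 fun n hn1 hn2 => lt_irrefl n (hxz n hn1.1 n hn2.1)
  have hMnot : M ∉ {n | SplitsAt t x n} ∪ {n | SplitsAt t z n} := by
    rintro (h | h)
    · exact not_splitsAt_max ht hxne h
    · exact lt_irrefl M (hxz M hMx M h.1)
  have heq : splitCount t (x ∪ z) = splitCount t x + splitCount t z + 1 := by
    rw [splitCount, key, Set.ncard_insert_of_notMem hMnot (hfinx.union hfinz),
      Set.ncard_union_eq hdisjS hfinx hfinz]
    rfl
  refine ⟨heq, ?_⟩
  rcases Nat.even_or_odd (splitCount t x) with he1 | ho1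
  · rcases Nat.even_or_odd (splitCount t z) with he2 | ho2
    · refine Or.inr (Or.inr ?_)
      rw [heq]
      exact (he1.add he2).add_one
    · exact Or.inr (Or.inl ho2)
  · exact Or.inl ho1
end

section
/- If t = (t_i) is an ordered disjoint sequence in F (i.e., max t_i < min t_j for i < j), then no two disjoint elements v, w ∈ FU(t) mesh via elements of a fixed sequence s with supports inside them; consequently, FU(t) cannot include any s-meshed set. In particular, an s-meshed set A is not contained in FU(t) for any ordered condensation t of s. -/
open Finset

/-- an ordered sequence: `max (t i) < min (t j)` for `i < j`. -/
def IsOrderedSeq (t : ℕ → Finset ℕ) : Prop := ∀ i j : ℕ, i < j → ordLT (t i) (t j)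

/-- two sets mesh if neither lies entirely below the other. -/
def Mesh (s t : Finset ℕ) : Prop := ¬ ordLT s t ∧ ¬ ordLT t s

/-- finite unions of a finite sequence. -/
def FUfin {n : ℕ} (t : Fin n → Finset ℕ) : Set (Finset ℕ) :=
  {x | ∃ v : Finset (Fin n), v.Nonempty ∧ x = v.biUnion t}

/-- the meshing graph of `t` w.r.t. `s` is complete: any two distinct members of `t`
contain members of `s` which mesh. -/
def CompleteMesh (s : ℕ → Finset ℕ) {n : ℕ} (t : Fin n → Finset ℕ) : Prop :=
  ∀ i j : Fin n, i ≠ j → ∃ m k, s m ⊆ t i ∧ s k ⊆ t j ∧ Mesh (s m) (s k)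

/-- `A` is `s`-meshed: for every `n` there is an `n`-witness, i.e. a disjoint sequence of
length `n` whose FU-set lies in `FU s ∩ A` and whose meshing graph is complete. -/
def SMeshed (s : ℕ → Finset ℕ) (A : Set (Finset ℕ)) : Prop :=
  ∀ n : ℕ, ∃ t : Fin n → Finset ℕ, (∀ i, (t i).Nonempty) ∧
    Pairwise (Function.onFun Disjoint t) ∧ FUfin t ⊆ FU s ∩ A ∧ CompleteMesh s t

/-- If `t` is an ordered condensation of `s`, then no two disjoint elements of `FU t`
mesh via elements of `s` inside them; consequently `FU t` contains no `s`-meshed set. -/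
theorem ordered_condensation_not_meshed (s t : ℕ → Finset ℕ)
    (hs : IsDisjointSeq s) (ht : IsDisjointSeq t) (hord : IsOrderedSeq t)
    (hcond : FU t ⊆ FU s) :
    (∀ v ∈ FU t, ∀ w ∈ FU t, Disjoint v w →
      ¬ ∃ m k, s m ⊆ v ∧ s k ⊆ w ∧ Mesh (s m) (s k)) ∧
    ∀ A : Set (Finset ℕ), SMeshed s A → ¬ A ⊆ FU t := by
  have key : ∀ v ∈ FU t, ∀ m, s m ⊆ v →
      ∃ p : Finset ℕ, v = p.biUnion t ∧ ∃ i ∈ p, s m ⊆ t i := by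
    rintro v ⟨p, hp, rfl⟩ m hm
    refine ⟨p, rfl, ?_⟩
    obtain ⟨a, ha⟩ := hs.1 m
    have hav := hm ha
    simp only [Finset.mem_biUnion] at hav
    obtain ⟨i, hi, hai⟩ := hav
    refine ⟨i, hi, ?_⟩
    have hti : t i ∈ FU s := hcond ⟨{i}, Finset.singleton_nonempty i, by simp⟩
    obtain ⟨u, hu, htiu⟩ := hti
    rw [htiu] at hai
    simp only [Finset.mem_biUnion] at hai
    obtain ⟨n, hn, han⟩ := hai
    have hnm : n = m := by
      by_contra hne
      exact Finset.disjoint_left.mp (hs.2 hne) han ha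
    subst hnm
    rw [htiu]
    exact Finset.subset_biUnion_of_mem s hn
  have part1 : ∀ v ∈ FU t, ∀ w ∈ FU t, Disjoint v w →
      ¬ ∃ m k, s m ⊆ v ∧ s k ⊆ w ∧ Mesh (s m) (s k) := by
    rintro v hv w hw hdisj ⟨m, k, hmv, hkw, hmesh⟩
    obtain ⟨p, rfl, i, hip, hmi⟩ := key v hv m hmv
    obtain ⟨q, rfl, j, hjq, hkj⟩ := key _ hw k hkw
    have hij : i ≠ j := by
      rintro rfl
      obtain ⟨a, ha⟩ := ht.1 i
      exact Finset.disjoint_left.mp hdisj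
        (Finset.subset_biUnion_of_mem t hip ha)
        (Finset.subset_biUnion_of_mem t hjq ha)
    rcases lt_or_gt_of_ne hij with h | h
    · exact hmesh.1 fun a ha b hb => hord i j h a (hmi ha) b (hkj hb)
    · exact hmesh.2 fun a ha b hb => hord j i h a (hkj ha) b (hmi hb)
  refine ⟨part1, ?_⟩
  intro A hA hAt
  obtain ⟨u, hne, hpw, hsub, hcm⟩ := hA 2
  have h0 : u 0 ∈ FUfin u := ⟨{0}, Finset.singleton_nonempty _, by simp⟩
  have h1 : u 1 ∈ FUfin u := ⟨{1}, Finset.singleton_nonempty _, by simp⟩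
  have hd : Disjoint (u 0) (u 1) := hpw (by decide : (0 : Fin 2) ≠ 1)
  obtain ⟨m, k, h⟩ := hcm 0 1 (by decide)
  exact part1 _ (hAt (hsub h0).2) _ (hAt (hsub h1).2) hd ⟨m, k, h⟩
end

section
/- The property of being s-meshed is partition regular: if A ⊆ F is s-meshed and A = A₀ ∪ A₁, then A₀ or A₁ is s-meshed. -/
open Finset

/-!
The Finite Unions theorem is Hindman's theorem in the semigroup of finite sets of naturals under
*ordered* union (`x * y = x ∪ y` if `x` lies below `y`, an absorbing element otherwise), where an
FP-set is the FU-set of a block sequence. Colour each finite index set `v` by whether, for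
ultrafilter-many `N`, the union of the `v`-members of an `N`-term witness for `A` lies in `A₀`, and
take a block sequence `B` with monochromatic FU-set. For every `n`, one large `N` then condenses
the `N`-term witness along `B 0, …, B (n - 1)` into an `n`-term witness for `A₀` or for `A₁`
(as `A = A₀ ∪ A₁`); condensation preserves disjointness and complete meshing.
-/

open Filter Hindman

attribute [local instance] Ultrafilter.semigroup

instance : DecidableRel ordLT := fun _ _ => by unfold ordLT; infer_instance

lemma ordLT_union_left {x y z : Finset ℕ} : ordLT (x ∪ y) z ↔ ordLT x z ∧ ordLT y z := by
  simp only [ordLT, mem_union]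
  grind

lemma ordLT_union_right {x y z : Finset ℕ} : ordLT x (y ∪ z) ↔ ordLT x y ∧ ordLT x z := by
  simp only [ordLT, mem_union]
  grind

lemma ordLT_biUnion_right {x w : Finset ℕ} {B : ℕ → Finset ℕ} :
    ordLT x (w.biUnion B) ↔ ∀ j ∈ w, ordLT x (B j) := by
  simp only [ordLT, mem_biUnion]
  grind

lemma ordLT.disjoint {x y : Finset ℕ} (h : ordLT x y) : Disjoint x y :=
  disjoint_left.2 fun a ha ha' => lt_irrefl a (h a ha a ha')

inductive OrderedUnion
  | of : Finset ℕ → OrderedUnion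
  | zero : OrderedUnion

namespace OrderedUnion

instance : Mul OrderedUnion where
  mul
    | of x, of y => if ordLT x y then of (x ∪ y) else zero
    | _, _ => zero

lemma of_mul_of (x y : Finset ℕ) :
    of x * of y = if ordLT x y then of (x ∪ y) else zero := rfl

protected lemma mul_zero (a : OrderedUnion) : a * zero = zero := by cases a <;> rfl

instance : Semigroup OrderedUnion where
  mul_assoc := by
    rintro (x | _) (y | _) (z | _) <;> try rfl
    · by_cases hxy : ordLT x y <;> by_cases hyz : ordLT y z <;>
        simp_all [of_mul_of, ordLT_union_left, ordLT_union_right, union_assoc] <;> rfl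
    · simp only [OrderedUnion.mul_zero]

lemma FP_singletons_subset {a : Stream' OrderedUnion} {k : ℕ} (ha : ∀ i, a.get i = of {k + i}) :
    FP a ⊆ of '' {v | v.Nonempty ∧ ∀ i ∈ v, k ≤ i} := by
  intro m hm
  induction hm generalizing k with
  | head' a => exact ⟨{k}, by simp, by simpa using (ha 0).symm⟩
  | tail' a m _ ih =>
    obtain ⟨v, ⟨hv, hvk⟩, rfl⟩ := ih (k := k + 1) fun i => by
      rw [Stream'.get_tail, ha, add_assoc, add_comm 1]
    exact ⟨v, ⟨hv, fun i hi => (hvk i hi).trans' (by omega)⟩, rfl⟩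
  | cons' a m _ ih =>
    obtain ⟨v, ⟨hv, hvk⟩, rfl⟩ := ih (k := k + 1) fun i => by
      rw [Stream'.get_tail, ha, add_assoc, add_comm 1]
    have hlt : ordLT {k} v := by simpa [ordLT] using hvk
    refine ⟨{k} ∪ v, ⟨by simp, ?_⟩, ?_⟩
    · simp only [mem_union, mem_singleton]
      rintro i (rfl | hi) <;> [rfl; exact (hvk i hi).trans' (by omega)]
    · rw [show a.head = of {k} by simpa using ha 0, of_mul_of, if_pos hlt]

lemma biUnion_mem_FP_drop {b : Stream' OrderedUnion} {B : ℕ → Finset ℕ}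
    (hb : ∀ i, b.get i = of (B i)) (hB : ∀ i j, i < j → ordLT (B i) (B j)) {w : Finset ℕ}
    (hw : w.Nonempty) {k : ℕ} (hk : ∀ i ∈ w, k ≤ i) : of (w.biUnion B) ∈ FP (b.drop k) := by
  induction w using induction_on_min generalizing k with
  | empty => exact absurd hw (by simp)
  | insert a w ha ih =>
    have hka : k ≤ a := hk a (mem_insert_self a w)
    have hdrop : FP (b.drop a) ⊆ FP (b.drop k) := by
      simpa [Stream'.drop_drop, Nat.add_sub_cancel' hka] using FP_drop_subset_FP (b.drop k) (a - k)
    apply hdrop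
    rcases w.eq_empty_or_nonempty with rfl | hw'
    · simpa [← hb] using FP.head (b.drop a)
    · have hmul : of (B a ∪ w.biUnion B) = of (B a) * of (w.biUnion B) := by
        rw [of_mul_of, if_pos (ordLT_biUnion_right.2 fun j hj => hB a j (ha j hj))]
      rw [biUnion_insert, hmul, ← hb, ← Stream'.head_drop]
      apply FP.cons
      rw [Stream'.tail_drop]
      exact ih hw' ha

lemma exists_ordered_FU_subset {U : Ultrafilter OrderedUnion} (hU : U * U = U)
    {D : Set (Finset ℕ)} (hD : of '' D ∈ U) :
    ∃ B : ℕ → Finset ℕ, (∀ i, B i ∈ D) ∧ (∀ i j, i < j → ordLT (B i) (B j)) ∧ FU B ⊆ D := by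
  obtain ⟨b, hb⟩ := exists_FP_of_large U hU _ hD
  choose B hBD hB using fun i => hb (FP.singleton b i)
  have hord : ∀ i j, i < j → ordLT (B i) (B j) := by
    intro i j hij
    by_contra hnot
    obtain ⟨v, -, hv⟩ := hb (FP.mul_two b i j hij)
    rw [← hB, ← hB, of_mul_of, if_neg hnot] at hv
    exact OrderedUnion.noConfusion hv
  refine ⟨B, hBD, hord, ?_⟩
  rintro _ ⟨w, hw, rfl⟩
  obtain ⟨v, hv, hvw⟩ := hb (biUnion_mem_FP_drop (fun i => (hB i).symm) hord hw (k := 0) (by simp))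
  exact of.inj hvw ▸ hv

end OrderedUnion

open OrderedUnion in
theorem exists_ordered_FU_subset_or_subset_compl (C : Set (Finset ℕ)) :
    ∃ B : ℕ → Finset ℕ, (∀ i, (B i).Nonempty) ∧ (∀ i j, i < j → ordLT (B i) (B j)) ∧
      (FU B ⊆ C ∨ FU B ⊆ Cᶜ) := by
  obtain ⟨U, hU, hFP⟩ := exists_idempotent_ultrafilter_le_FP (fun i => of {i})
  have hnonempty : of '' {v | v.Nonempty} ∈ U := by
    refine mem_of_superset hFP ((FP_singletons_subset (k := 0) fun i => ?_).trans ?_)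
    exacts [by simp [Stream'.get], Set.image_mono fun v hv => hv.1]
  rw [← Set.inter_univ {v : Finset ℕ | v.Nonempty}, ← Set.union_compl_self C,
    Set.inter_union_distrib_left, Set.image_union, Ultrafilter.union_mem_iff] at hnonempty
  rcases hnonempty with hC | hC
  · obtain ⟨B, hBD, hord, hFU⟩ := exists_ordered_FU_subset hU hC
    exact ⟨B, fun i => (hBD i).1, hord, .inl (hFU.trans Set.inter_subset_right)⟩
  · obtain ⟨B, hBD, hord, hFU⟩ := exists_ordered_FU_subset hU hC
    exact ⟨B, fun i => (hBD i).1, hord, .inr (hFU.trans Set.inter_subset_right)⟩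

lemma nonempty_of_mem_FU {B : ℕ → Finset ℕ} (hB : ∀ i, (B i).Nonempty) {x : Finset ℕ}
    (hx : x ∈ FU B) : x.Nonempty := by
  obtain ⟨w, ⟨i, hi⟩, rfl⟩ := hx
  exact (hB i).mono (subset_biUnion_of_mem B hi)

def IsMeshedWitness (s : ℕ → Finset ℕ) (A : Set (Finset ℕ)) {n : ℕ} (t : Fin n → Finset ℕ) :
    Prop :=
  (∀ i, (t i).Nonempty) ∧ Pairwise (Function.onFun Disjoint t) ∧ FUfin t ⊆ FU s ∩ A ∧
    CompleteMesh s t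

section Condensation

variable {s : ℕ → Finset ℕ} {N n : ℕ} {t : Fin N → Finset ℕ} {S : Fin n → Finset (Fin N)}

lemma CompleteMesh.biUnion (ht : CompleteMesh s t) (hS : ∀ k, (S k).Nonempty)
    (hSd : Pairwise (Function.onFun Disjoint S)) : CompleteMesh s fun k => (S k).biUnion t := by
  intro k l hkl
  obtain ⟨i, hi⟩ := hS k
  obtain ⟨j, hj⟩ := hS l
  obtain ⟨m, m', hm, hm', hmesh⟩ :=
    ht i j fun hij => disjoint_left.1 (hSd hkl) hi (hij ▸ hj : i ∈ S l)
  exact ⟨m, m', hm.trans (subset_biUnion_of_mem t hi), hm'.trans (subset_biUnion_of_mem t hj),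
    hmesh⟩

lemma pairwise_disjoint_biUnion (ht : Pairwise (Function.onFun Disjoint t))
    (hSd : Pairwise (Function.onFun Disjoint S)) :
    Pairwise (Function.onFun Disjoint fun k => (S k).biUnion t) := by
  intro k l hkl
  rw [Function.onFun, disjoint_biUnion_left]
  intro i hi
  rw [disjoint_biUnion_right]
  intro j hj
  exact ht fun hij => disjoint_left.1 (hSd hkl) hi (hij ▸ hj : i ∈ S l)

lemma IsMeshedWitness.condense {A A' : Set (Finset ℕ)} (ht : IsMeshedWitness s A t)
    (hS : ∀ k, (S k).Nonempty) (hSd : Pairwise (Function.onFun Disjoint S))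
    (hA' : FUfin (fun k => (S k).biUnion t) ⊆ A') :
    IsMeshedWitness s A' fun k => (S k).biUnion t := by
  obtain ⟨htne, htd, htFU, htmesh⟩ := ht
  refine ⟨fun k => (hS k).biUnion fun i _ => htne i, pairwise_disjoint_biUnion htd hSd,
    fun x hx => ⟨?_, hA' hx⟩, htmesh.biUnion hS hSd⟩
  obtain ⟨w, ⟨k, hk⟩, rfl⟩ := hx
  refine (htFU ⟨w.biUnion S, (hS k).mono (subset_biUnion_of_mem S hk), ?_⟩).1
  exact (biUnion_biUnion w S t).symm

end Condensation

-- Indices `≥ N` in `v` are ignored.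
noncomputable def finBiUnion {N : ℕ} (t : Fin N → Finset ℕ) (v : Finset ℕ) : Finset ℕ :=
  (v.preimage Fin.val Fin.val_injective.injOn).biUnion t

section Compactness

variable {s : ℕ → Finset ℕ} {A : Set (Finset ℕ)} {t : ∀ N, Fin N → Finset ℕ}

lemma eventually_finBiUnion_mem (ht : ∀ N, IsMeshedWitness s A (t N)) {v : Finset ℕ}
    (hv : v.Nonempty) : ∀ᶠ N in atTop, finBiUnion (t N) v ∈ A := by
  filter_upwards [eventually_gt_atTop (v.max' hv)] with N hN
  exact ((ht N).2.2.1 ⟨_, ⟨⟨_, hN⟩, mem_preimage.2 (v.max'_mem hv)⟩, rfl⟩).2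

lemma sMeshed_of_eventually_mem {l : Filter ℕ} [l.NeBot] (hl : l ≤ atTop)
    (ht : ∀ N, IsMeshedWitness s A (t N)) {B : ℕ → Finset ℕ} (hB : ∀ i, (B i).Nonempty)
    (hBd : Pairwise (Function.onFun Disjoint B)) {A' : Set (Finset ℕ)}
    (hA' : ∀ x ∈ FU B, ∀ᶠ N in l, finBiUnion (t N) x ∈ A') : SMeshed s A' := by
  intro n
  have hlarge : ∀ᶠ N in l, ∀ k : Fin n, ∀ i ∈ B k, i < N :=
    eventually_all.2 fun k => (eventually_all_finset _).2 fun i _ => hl (eventually_gt_atTop i)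
  have hunions : ∀ᶠ N in l, ∀ w : Finset (Fin n), w.Nonempty →
      finBiUnion (t N) (w.biUnion fun k => B k) ∈ A' :=
    eventually_all.2 fun w => eventually_imp_distrib_left.2 fun hw =>
      hA' _ ⟨w.image Fin.val, hw.image _, image_biUnion.symm⟩
  obtain ⟨N, hN, hNw⟩ := (hlarge.and hunions).exists
  set S : Fin n → Finset (Fin N) := fun k => (B k).preimage Fin.val Fin.val_injective.injOn
  refine ⟨fun k => (S k).biUnion (t N), (ht N).condense ?_ ?_ ?_⟩
  · intro k
    obtain ⟨i, hi⟩ := hB k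
    exact ⟨⟨i, hN k i hi⟩, mem_preimage.2 hi⟩
  · intro k l hkl
    exact disjoint_left.2 fun i hik hil =>
      disjoint_left.1 (hBd (Fin.val_injective.ne hkl)) (mem_preimage.1 hik) (mem_preimage.1 hil)
  · rintro _ ⟨w, hw, rfl⟩
    convert hNw w hw using 1
    rw [finBiUnion, ← biUnion_biUnion]
    congr 1
    ext i
    simp [S]

end Compactness

theorem sMeshed_partition_regular_general (s : ℕ → Finset ℕ)
    (A A₀ A₁ : Set (Finset ℕ)) (hA : SMeshed s A) (hsplit : A = A₀ ∪ A₁) :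
    SMeshed s A₀ ∨ SMeshed s A₁ := by
  choose t ht using hA
  have hle : (hyperfilter ℕ : Filter ℕ) ≤ atTop := Nat.cofinite_eq_atTop ▸ hyperfilter_le_cofinite
  obtain ⟨B, hB, hord, hC⟩ := exists_ordered_FU_subset_or_subset_compl
    {v | ∀ᶠ N in hyperfilter ℕ, finBiUnion (t N) v ∈ A₀}
  have hBd : Pairwise (Function.onFun Disjoint B) := fun i j hij =>
    hij.lt_or_gt.elim (fun h => (hord i j h).disjoint) fun h => (hord j i h).disjoint.symm
  refine hC.imp (sMeshed_of_eventually_mem hle ht hB hBd) fun hC₁ =>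
    sMeshed_of_eventually_mem hle ht hB hBd fun x hx => ?_
  filter_upwards [hle (eventually_finBiUnion_mem ht (nonempty_of_mem_FU hB hx)),
    Ultrafilter.eventually_not.2 (hC₁ hx)] with N hN hN₀
  rw [hsplit] at hN
  exact hN.resolve_left hN₀

/-- Being `s`-meshed is partition regular. -/
theorem sMeshed_partition_regular (s : ℕ → Finset ℕ) (hs : IsDisjointSeq s)
    (A A₀ A₁ : Set (Finset ℕ)) (hA : SMeshed s A) (hsplit : A = A₀ ∪ A₁) :
    SMeshed s A₀ ∨ SMeshed s A₁ :=
  sMeshed_partition_regular_general s A A₀ A₁ hA hsplit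
end

section
/- Let s be a disjoint sequence in F containing, for every n, n-element completely meshed subsequences occurring arbitrarily late. If A ⊆ ω meets min[FU(s)] in an infinite set and B ⊆ ω meets max[FU(s)] in an infinite set, then min⁻¹[A] ∩ max⁻¹[B] is s-meshed. -/
open Finset

/-- the minimum of a finite set of naturals (0 for the empty set). -/
noncomputable def fmin (v : Finset ℕ) : ℕ := sInf (↑v : Set ℕ)

/-- the maximum of a finite set of naturals (0 for the empty set). -/
noncomputable def fmax (v : Finset ℕ) : ℕ := sSup (↑v : Set ℕ)

/-!
Every finite union of blocks of `s` takes its minimum (maximum) from one of its blocks, so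
infinitely many blocks have their minimum in `A` and infinitely many their maximum in `B`.
Since disjoint blocks eventually lie above any bound, we can choose three layers of `n` blocks
each, every layer entirely above the previous one: blocks with minimum in `A`, then `n`
completely meshed blocks supplied by the hypothesis, then blocks with maximum in `B`. Glue the
`k`-th block of each layer into `t k`. Any union of the `t k` then has its minimum in the bottom
layer and its maximum in the top layer, and the middle layer keeps the meshing graph complete.
-/

open Function

lemma fmin_mem {v : Finset ℕ} (h : v.Nonempty) : fmin v ∈ v := by
  simpa [fmin] using Nat.sInf_mem (coe_nonempty.mpr h)

lemma fmin_le {v : Finset ℕ} {a : ℕ} (h : a ∈ v) : fmin v ≤ a :=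
  Nat.sInf_le (mem_coe.mpr h)

lemma fmax_mem {v : Finset ℕ} (h : v.Nonempty) : fmax v ∈ v := by
  simpa [fmax] using (coe_nonempty.mpr h).csSup_mem v.finite_toSet

lemma le_fmax {v : Finset ℕ} {a : ℕ} (h : a ∈ v) : a ≤ fmax v :=
  le_csSup v.finite_toSet.bddAbove (mem_coe.mpr h)

lemma fmin_union_of_ordLT {a b : Finset ℕ} (ha : a.Nonempty) (hab : ordLT a b) :
    fmin (a ∪ b) = fmin a := by
  have hmem : fmin (a ∪ b) ∈ a ∪ b := fmin_mem (ha.mono subset_union_left)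
  refine le_antisymm (fmin_le (subset_union_left (fmin_mem ha))) ?_
  rcases mem_union.mp hmem with h | h
  · exact fmin_le h
  · exact (hab _ (fmin_mem ha) _ h).le

lemma fmax_union_of_ordLT {a b : Finset ℕ} (hb : b.Nonempty) (hab : ordLT a b) :
    fmax (a ∪ b) = fmax b := by
  have hmem : fmax (a ∪ b) ∈ a ∪ b := fmax_mem (hb.mono subset_union_right)
  refine le_antisymm ?_ (le_fmax (subset_union_right (fmax_mem hb)))
  rcases mem_union.mp hmem with h | h
  · exact (hab _ h _ (fmax_mem hb)).le
  · exact le_fmax h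

section biUnion

variable {ι : Type*} {v : Finset ι} {t : ι → Finset ℕ}

lemma exists_fmin_biUnion_eq (hv : v.Nonempty) (ht : ∀ k, (t k).Nonempty) :
    ∃ k ∈ v, fmin (v.biUnion t) = fmin (t k) := by
  obtain ⟨k, hk, hmin⟩ := mem_biUnion.mp (fmin_mem (hv.biUnion fun k _ => ht k))
  exact ⟨k, hk,
    le_antisymm (fmin_le (mem_biUnion.mpr ⟨k, hk, fmin_mem (ht k)⟩)) (fmin_le hmin)⟩

lemma exists_fmax_biUnion_eq (hv : v.Nonempty) (ht : ∀ k, (t k).Nonempty) :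
    ∃ k ∈ v, fmax (v.biUnion t) = fmax (t k) := by
  obtain ⟨k, hk, hmax⟩ := mem_biUnion.mp (fmax_mem (hv.biUnion fun k _ => ht k))
  exact ⟨k, hk,
    le_antisymm (le_fmax hmax) (le_fmax (mem_biUnion.mpr ⟨k, hk, fmax_mem (ht k)⟩))⟩

end biUnion

section ordLT

variable {a b c : Finset ℕ}

lemma ordLT.disjoint_s14 (h : ordLT a b) : Disjoint a b :=
  disjoint_left.mpr fun x hxa hxb => (h x hxa x hxb).false

lemma ordLT.mono_left {a' : Finset ℕ} (h : ordLT a b) (ha : a' ⊆ a) : ordLT a' b :=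
  fun x hx => h x (ha hx)

lemma ordLT.trans (hab : ordLT a b) (hbc : ordLT b c) (hb : b.Nonempty) : ordLT a c :=
  fun x hx z hz => (hab x hx _ hb.choose_spec).trans (hbc _ hb.choose_spec z hz)

lemma ordLT_union_left_s14 (hac : ordLT a c) (hbc : ordLT b c) : ordLT (a ∪ b) c := by
  intro x hx
  rcases mem_union.mp hx with h | h
  exacts [hac x h, hbc x h]

lemma ordLT_union_right_s14 (hab : ordLT a b) (hac : ordLT a c) : ordLT a (b ∪ c) := by
  intro x hx z hz
  rcases mem_union.mp hz with h | h
  exacts [hab x hx z h, hac x hx z h]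

end ordLT

lemma pairwise_disjoint_union_of_ordLT {ι : Type*} {a b : ι → Finset ℕ}
    (ha : Pairwise (Disjoint on a)) (hb : Pairwise (Disjoint on b))
    (hab : ∀ k k', ordLT (a k) (b k')) : Pairwise (Disjoint on fun k => a k ∪ b k) := by
  intro k k' hkk'
  simp only [onFun, disjoint_union_left, disjoint_union_right]
  exact ⟨⟨ha hkk', (hab k' k).disjoint_s14.symm⟩, (hab k k').disjoint_s14, hb hkk'⟩

lemma CompleteMesh.mono {s : ℕ → Finset ℕ} {n : ℕ} {t t' : Fin n → Finset ℕ}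
    (h : CompleteMesh s t) (htt' : ∀ k, t k ⊆ t' k) : CompleteMesh s t' := by
  intro k k' hkk'
  obtain ⟨m, m', hm, hm', hmesh⟩ := h k k' hkk'
  exact ⟨m, m', hm.trans (htt' k), hm'.trans (htt' k'), hmesh⟩

lemma FUfin_biUnion_subset_FU (s : ℕ → Finset ℕ) {n : ℕ} (I : Fin n → Finset ℕ)
    (hI : ∀ k, (I k).Nonempty) : FUfin (fun k => (I k).biUnion s) ⊆ FU s := by
  rintro _ ⟨v, hv, rfl⟩
  exact ⟨v.biUnion I, hv.biUnion fun k _ => hI k, (biUnion_biUnion _ _ _).symm⟩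

lemma Set.Infinite.exists_injective_fin {α : Type*} {S : Set α} (hS : S.Infinite) (n : ℕ) :
    ∃ f : Fin n → α, Injective f ∧ ∀ k, f k ∈ S :=
  ⟨fun k => hS.natEmbedding _ k,
    fun _ _ h => Fin.val_injective ((hS.natEmbedding _).injective (Subtype.ext h)),
    fun k => (hS.natEmbedding _ k).2⟩

section disjointSeq

variable {s : ℕ → Finset ℕ}

/-- Only finitely many pairwise disjoint blocks can reach down to `u.sup id`. -/
lemma exists_forall_ordLT_of_lt (hdisj : Pairwise (Disjoint on s)) (u : Finset ℕ) :
    ∃ N, ∀ j, N < j → ordLT u (s j) := by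
  have hfin : {j | ∃ y ∈ s j, y ≤ u.sup id}.Finite := by
    have hsub :
        {j | ∃ y ∈ s j, y ≤ u.sup id} ⊆ ⋃ y ∈ Set.Iic (u.sup id), {j | y ∈ s j} :=
      fun j ⟨y, hy, hyu⟩ => Set.mem_biUnion hyu hy
    refine ((Set.finite_Iic _).biUnion fun y _ => Set.Subsingleton.finite ?_).subset hsub
    exact fun j hj j' hj' => by_contra fun hne => disjoint_left.mp (hdisj hne) hj hj'
  obtain ⟨N, hN⟩ := hfin.bddAbove
  refine ⟨N, fun j hj x hx y hy => ?_⟩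
  by_contra! hyx
  exact hj.not_ge (hN ⟨y, hy, hyx.trans (le_sup (f := id) hx)⟩)

lemma infinite_setOf_fmin_mem (hne : ∀ j, (s j).Nonempty) {A : Set ℕ}
    (hA : (A ∩ fmin '' FU s).Infinite) : {j | fmin (s j) ∈ A}.Infinite := by
  refine Set.Infinite.of_image (fun j => fmin (s j)) (hA.mono ?_)
  rintro _ ⟨haA, _, ⟨v, hv, rfl⟩, rfl⟩
  obtain ⟨j, -, hj⟩ := exists_fmin_biUnion_eq hv hne
  exact ⟨j, show fmin (s j) ∈ A from hj ▸ haA, hj.symm⟩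

lemma infinite_setOf_fmax_mem (hne : ∀ j, (s j).Nonempty) {B : Set ℕ}
    (hB : (B ∩ fmax '' FU s).Infinite) : {j | fmax (s j) ∈ B}.Infinite := by
  refine Set.Infinite.of_image (fun j => fmax (s j)) (hB.mono ?_)
  rintro _ ⟨hbB, _, ⟨v, hv, rfl⟩, rfl⟩
  obtain ⟨j, -, hj⟩ := exists_fmax_biUnion_eq hv hne
  exact ⟨j, show fmax (s j) ∈ B from hj ▸ hbB, hj.symm⟩

lemma exists_witness_of_layered (hne : ∀ j, (s j).Nonempty) (hdisj : Pairwise (Disjoint on s))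
    {n : ℕ} {a b c : Fin n → ℕ} (ha : Injective a) (hb : Injective b) (hc : Injective c)
    (hab : ∀ k k', ordLT (s (a k)) (s (b k'))) (hbc : ∀ k k', ordLT (s (b k)) (s (c k')))
    (hmesh : CompleteMesh s fun k => s (b k)) {A B : Set ℕ}
    (hA : ∀ k, fmin (s (a k)) ∈ A) (hB : ∀ k, fmax (s (c k)) ∈ B) :
    ∃ t : Fin n → Finset ℕ, (∀ i, (t i).Nonempty) ∧ Pairwise (Disjoint on t) ∧
      FUfin t ⊆ FU s ∩ {v | fmin v ∈ A ∧ fmax v ∈ B} ∧ CompleteMesh s t := by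
  set t : Fin n → Finset ℕ := fun k => s (a k) ∪ (s (b k) ∪ s (c k))
  have hac : ∀ k k', ordLT (s (a k)) (s (c k')) := fun k k' =>
    (hab k k').trans (hbc k' k') (hne _)
  have ht_eq : t = fun k => ({a k, b k, c k} : Finset ℕ).biUnion s := by
    simp only [t, biUnion_insert, singleton_biUnion]
  have hne_t : ∀ k, (t k).Nonempty := fun k => (hne _).mono subset_union_left
  have hmin : ∀ k, fmin (t k) = fmin (s (a k)) := fun k =>
    fmin_union_of_ordLT (hne _) (ordLT_union_right_s14 (hab k k) (hac k k))
  have hmax : ∀ k, fmax (t k) = fmax (s (c k)) := fun k => by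
    change fmax (s (a k) ∪ (s (b k) ∪ s (c k))) = _
    rw [← union_assoc]
    exact fmax_union_of_ordLT (hne _) (ordLT_union_left_s14 (hac k k) (hbc k k))
  refine ⟨t, hne_t, ?_, ?_, hmesh.mono fun k => subset_union_left.trans subset_union_right⟩
  · exact pairwise_disjoint_union_of_ordLT (hdisj.comp_of_injective ha)
      (pairwise_disjoint_union_of_ordLT (hdisj.comp_of_injective hb)
        (hdisj.comp_of_injective hc) hbc)
      fun k k' => ordLT_union_right_s14 (hab k k') (hac k k')
  · rintro _ ⟨v, hv, rfl⟩
    have hFU := FUfin_biUnion_subset_FU s _ (fun k => insert_nonempty (a k) {b k, c k})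
    refine ⟨ht_eq ▸ hFU ⟨v, hv, rfl⟩, ?_, ?_⟩
    · obtain ⟨k, -, hk⟩ := exists_fmin_biUnion_eq hv hne_t
      exact hk ▸ hmin k ▸ hA k
    · obtain ⟨k, -, hk⟩ := exists_fmax_biUnion_eq hv hne_t
      exact hk ▸ hmax k ▸ hB k

end disjointSeq

/-- If `A` meets `min[FU s]` infinitely and `B` meets `max[FU s]` infinitely, then
`min⁻¹[A] ∩ max⁻¹[B]` is `s`-meshed. -/
theorem preimages_meshed (s : ℕ → Finset ℕ) (hs : IsDisjointSeq s)
    (harb : ∀ n N : ℕ, ∃ i : Fin n → ℕ, StrictMono i ∧ (∀ k, N < i k) ∧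
      CompleteMesh s (fun k => s (i k)))
    (A B : Set ℕ)
    (hA : (A ∩ fmin '' FU s).Infinite) (hB : (B ∩ fmax '' FU s).Infinite) :
    SMeshed s {v | fmin v ∈ A ∧ fmax v ∈ B} := by
  obtain ⟨hne, hdisj⟩ := hs
  intro n
  obtain ⟨a, ha, haA⟩ := (infinite_setOf_fmin_mem hne hA).exists_injective_fin n
  obtain ⟨N, hN⟩ := exists_forall_ordLT_of_lt hdisj (univ.biUnion fun k => s (a k))
  obtain ⟨b, hb, hbN, hmesh⟩ := harb n N
  obtain ⟨N', hN'⟩ := exists_forall_ordLT_of_lt hdisj (univ.biUnion fun k => s (b k))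
  obtain ⟨c, hc, hcB⟩ :=
    ((infinite_setOf_fmax_mem hne hB).sdiff (Set.finite_Iic N')).exists_injective_fin n
  refine exists_witness_of_layered hne hdisj ha hb.injective hc
    (fun k k' => (hN _ (hbN k')).mono_left
      (subset_biUnion_of_mem (fun k => s (a k)) (mem_univ k)))
    (fun k k' => (hN' _ (not_le.mp (hcB k').2)).mono_left
      (subset_biUnion_of_mem (fun k => s (b k)) (mem_univ k)))
    hmesh haA fun k => (hcB k).1
end

section
/- For every union ultrafilter u on F, u is an idempotent element of the semigroup δF: u · u = u, where · extends disjoint union. -/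
open Finset

lemma notMem_sets (u : Ultrafilter (Finset ℕ)) (hu : IsUnionUltrafilter u) (k : ℕ) :
    {w : Finset ℕ | k ∉ w} ∈ u := by
  by_contra h
  have h2 : {w : Finset ℕ | k ∈ w} ∈ u := by
    have := (Ultrafilter.compl_mem_iff_notMem (s := {w : Finset ℕ | k ∉ w})).2 h
    convert this using 1
    ext w; simp
  obtain ⟨t, hd, htu, htA⟩ := hu _ h2
  have h0 : t 0 ∈ FU t := ⟨{0}, Finset.singleton_nonempty 0, by simp⟩
  have h1 : t 1 ∈ FU t := ⟨{1}, Finset.singleton_nonempty 1, by simp⟩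
  exact Finset.disjoint_left.1 (hd.2 (by norm_num : (0:ℕ) ≠ 1)) (htA h0) (htA h1)
lemma disj_mem (u : Ultrafilter (Finset ℕ)) (hu : IsUnionUltrafilter u) (v : Finset ℕ) :
    {w : Finset ℕ | Disjoint v w} ∈ u := by
  have : {w : Finset ℕ | Disjoint v w} = ⋂ k ∈ v, {w : Finset ℕ | k ∉ w} := by
    ext w
    simp [Finset.disjoint_left]
  rw [this]
  exact (Filter.biInter_finset_mem v).2 fun k _ => notMem_sets u hu k

lemma fwd (u : Ultrafilter (Finset ℕ)) (hu : IsUnionUltrafilter u)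
    {A : Set (Finset ℕ)} (hA : A ∈ u) :
    {v : Finset ℕ | {w : Finset ℕ | Disjoint v w ∧ v ∪ w ∈ A} ∈ u} ∈ u := by
  obtain ⟨t, hd, htu, htA⟩ := hu A hA
  refine u.toFilter.mem_of_superset htu ?_
  rintro v ⟨I, hI, rfl⟩
  simp only [Set.mem_setOf_eq]
  have hmem : FU t ∩ {w : Finset ℕ | Disjoint (I.biUnion t) w} ∈ u :=
    Filter.inter_mem htu (disj_mem u hu _)
  refine u.toFilter.mem_of_superset hmem ?_
  rintro w ⟨⟨J, hJ, rfl⟩, hw⟩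
  refine ⟨hw, htA ⟨I ∪ J, Finset.Nonempty.mono Finset.subset_union_left hI, ?_⟩⟩
  ext a; simp [Finset.mem_biUnion, Finset.mem_union, or_and_right, exists_or]

/-- Every union ultrafilter lies in `δF` and is idempotent there: `u · u = u`, where
`A ∈ p·q ↔ {v : {w ∈ σ(v) : v ∪ w ∈ A} ∈ q} ∈ p` extends disjoint union. -/
theorem union_ultrafilter_idempotent (u : Ultrafilter (Finset ℕ))
    (hu : IsUnionUltrafilter u) :
    ({w : Finset ℕ | w.Nonempty} ∈ u ∧ ∀ v : Finset ℕ, {w | Disjoint v w} ∈ u) ∧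
    ∀ A : Set (Finset ℕ),
      A ∈ u ↔ {v : Finset ℕ | {w : Finset ℕ | Disjoint v w ∧ v ∪ w ∈ A} ∈ u} ∈ u := by
  have hdisj := disj_mem u hu
  refine ⟨⟨?_, hdisj⟩, fun A => ⟨fwd u hu, fun hB => ?_⟩⟩
  · obtain ⟨t, hd, htu, htA⟩ := hu Set.univ Filter.univ_mem
    refine u.toFilter.mem_of_superset htu ?_
    rintro v ⟨I, hI, rfl⟩
    obtain ⟨i, hi⟩ := hI
    obtain ⟨a, ha⟩ := hd.1 i
    exact ⟨a, Finset.mem_biUnion.2 ⟨i, hi, ha⟩⟩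
  · by_contra hA
    rw [← Ultrafilter.compl_mem_iff_notMem] at hA
    have h2 := fwd u hu hA
    obtain ⟨v, hv1, hv2⟩ := Ultrafilter.nonempty_of_mem (Filter.inter_mem hB h2)
    obtain ⟨w, hw1, hw2⟩ := Ultrafilter.nonempty_of_mem (Filter.inter_mem hv1 hv2)
    exact hw2.2 hw1.2
end
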